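/- Let φ be a 3CNF formula with n ≥ 4 variables and ε = 1/(2n³). If φ is unsatisfiable, then in every ε-Nash equilibrium (x, y) of the game G(φ), both players play the strategy f with probability greater than 1 − ε, i.e. x_f > 1 − ε and y_f > 1 − ε. -/

import Mathlib

open Finset

/-- The probability simplex over a finite strategy set `S`. -/
def simplex (S : Type*) [Fintype S] : Set (S → ℝ) :=
  {x | (∀ i, 0 ≤ x i) ∧ ∑ i, x i = 1}

/-- Expected payoff `Σᵢⱼ xᵢ yⱼ A i j`. -/
def payoff {S : Type*} [Fintype S] (A : S → S → ℝ) (x y : S → ℝ) : ℝ :=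
  ∑ i, ∑ j, x i * y j * A i j

/-- The point mass at pure strategy `s`. -/
def pureStrat {S : Type*} [DecidableEq S] (s : S) : S → ℝ :=
  fun i => if i = s then 1 else 0

/-- Support of a mixed strategy. -/
def supp {S : Type*} (x : S → ℝ) : Set S := {i | 0 < x i}

/-- L1 distance between mixed strategies. -/
def dist1 {S : Type*} [Fintype S] (x y : S → ℝ) : ℝ := ∑ i, |x i - y i|

/-- `(x, y)` is an ε-Nash equilibrium of the bi-matrix game `(R, C)`. -/
def IsEpsNash {S : Type*} [Fintype S] [DecidableEq S]
    (R C : S → S → ℝ) (x y : S → ℝ) (ε : ℝ) : Prop :=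
  x ∈ simplex S ∧ y ∈ simplex S ∧
  (∀ s : S, payoff R (pureStrat s) y ≤ payoff R x y + ε) ∧
  (∀ s : S, payoff C x (pureStrat s) ≤ payoff C x y + ε)

/-- A literal over `n` variables: a variable together with a sign
(`true` = the positive literal, `false` = the negated literal). -/
abbrev Lit (n : ℕ) := Fin n × Bool

/-- Negation of a literal. -/
def negLit {n : ℕ} (l : Lit n) : Lit n := (l.1, !l.2)

/-- A 3CNF formula with `n` variables and `m` clauses; each clause is a set of
exactly 3 literals. -/
structure CNF3 (n m : ℕ) where
  clause : Fin m → Finset (Lit n)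
  card3 : ∀ c, (clause c).card = 3

/-- An assignment `a` satisfies a clause if some literal of the clause is true under `a`. -/
def SatAssign {n m : ℕ} (φ : CNF3 n m) (a : Fin n → Bool) : Prop :=
  ∀ c, ∃ l ∈ φ.clause c, a l.1 = l.2

/-- Satisfiability of a 3CNF formula. -/
def CNF3.Satisfiable {n m : ℕ} (φ : CNF3 n m) : Prop :=
  ∃ a : Fin n → Bool, SatAssign φ a

/-- Strategy set of the game `G(φ)`: two copies `L₁`, `L₂` of the literals,
then the variables, the clauses, and the special strategy `f`. -/
abbrev GStrat (n m : ℕ) := Lit n ⊕ (Lit n ⊕ (Fin n ⊕ (Fin m ⊕ Unit)))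

/-- The special strategy `f` of the game `G(φ)`. -/
def fStrat (n m : ℕ) : GStrat n m := Sum.inr (Sum.inr (Sum.inr (Sum.inr ())))

/-- The row player's payoff in the game `G(φ)`. -/
def gU1 {n m : ℕ} (φ : CNF3 n m) : GStrat n m → GStrat n m → ℝ
  | Sum.inr (Sum.inl _), _ => -2 * (n : ℝ)
  | Sum.inr (Sum.inr (Sum.inr (Sum.inr _))),
      Sum.inr (Sum.inr (Sum.inr (Sum.inr _))) => 2 * (n : ℝ)
  | Sum.inr (Sum.inr (Sum.inr (Sum.inr _))), _ => (n : ℝ) - 1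
  | _, Sum.inr (Sum.inr (Sum.inr (Sum.inr _))) => 0
  | _, Sum.inl _ => 0
  | Sum.inl a, Sum.inr (Sum.inl b) =>
      if a = negLit b then (n : ℝ) - 4 else (n : ℝ) - 1
  | Sum.inl _, _ => (n : ℝ) - 4
  | Sum.inr (Sum.inr (Sum.inl w)), Sum.inr (Sum.inl l) =>
      if l.1 = w then 0 else (n : ℝ)
  | Sum.inr (Sum.inr (Sum.inl _)), _ => (n : ℝ) - 4
  | Sum.inr (Sum.inr (Sum.inr (Sum.inl c))), Sum.inr (Sum.inl l) =>
      if l ∈ φ.clause c then 0 else (n : ℝ)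
  | Sum.inr (Sum.inr (Sum.inr (Sum.inl _))), _ => (n : ℝ) - 4

/-- The column player's payoff in the game `G(φ)`. -/
def gU2 {n m : ℕ} (φ : CNF3 n m) : GStrat n m → GStrat n m → ℝ
  | _, Sum.inl _ => -2 * (n : ℝ)
  | Sum.inr (Sum.inr (Sum.inr (Sum.inr _))),
      Sum.inr (Sum.inr (Sum.inr (Sum.inr _))) => 2 * (n : ℝ)
  | _, Sum.inr (Sum.inr (Sum.inr (Sum.inr _))) => (n : ℝ) - 1
  | Sum.inr (Sum.inr (Sum.inr (Sum.inr _))), _ => 0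
  | Sum.inr (Sum.inl _), _ => 0
  | Sum.inl a, Sum.inr (Sum.inl b) =>
      if a = negLit b then (n : ℝ) - 4 else (n : ℝ) - 1
  | _, Sum.inr (Sum.inl _) => (n : ℝ) - 4
  | Sum.inl a, Sum.inr (Sum.inr (Sum.inl w)) =>
      if a.1 = w then 0 else (n : ℝ)
  | _, Sum.inr (Sum.inr (Sum.inl _)) => (n : ℝ) - 4
  | Sum.inl a, Sum.inr (Sum.inr (Sum.inr (Sum.inl c))) =>
      if a ∈ φ.clause c then 0 else (n : ℝ)
  | _, Sum.inr (Sum.inr (Sum.inr (Sum.inl _))) => (n : ℝ) - 4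


/-!
Relabelling `L₁ ↔ L₂` turns the column player's payoff into the transpose of the row player's,
so every estimate proved for the row player also holds for the column player.

In an ε-equilibrium no deviation of the row player gains more than `ε` on average. Deviations
to `f` show that, once some player puts mass at least `ε` off `f`, both players play `f` with
probability `O(ε / n)`, the row player plays almost only `L₁` and the column player almost only
`L₂`. A deviation from `L₁` to a variable that the column player rarely covers shows that the
players rarely pick complementary literals: `3 · conflict ≤ ε`. Deviations to checkers show
that every clause carries `L₂`-mass and every variable `L₁`-mass about `1 / n`. Round the row
strategy to the majority assignment: every literal of a clause it falsifies has a negation of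
`L₁`-mass about `1 / (2n)`, so the conflict is about `1 / (2n²)`, far more than
`ε / 3 = 1 / (6n³)`.
-/

section BimatrixGame

variable {S : Type*} [Fintype S] [DecidableEq S]

theorem payoff_pureStrat_left (A : S → S → ℝ) (s : S) (y : S → ℝ) :
    payoff A (pureStrat s) y = ∑ j, y j * A s j := by
  simp [payoff, pureStrat, mul_comm]

theorem payoff_eq_sum_mul_payoff_pureStrat (A : S → S → ℝ) (x y : S → ℝ) :
    payoff A x y = ∑ s, x s * payoff A (pureStrat s) y := by
  simp only [payoff_pureStrat_left]
  simp only [payoff, mul_sum, mul_assoc]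

omit [Fintype S] in
theorem pureStrat_comp {σ : S → S} (hσ : Function.Involutive σ) (s : S) :
    pureStrat s ∘ σ = pureStrat (σ s) := by
  have hiff : ∀ i, σ i = s ↔ i = σ s := fun i =>
    ⟨fun h => by rw [← h, hσ], fun h => by rw [h, hσ]⟩
  ext i
  simp only [Function.comp_apply, pureStrat, hiff]

omit [DecidableEq S] in
theorem payoff_transpose_comp {σ : S → S} (hσ : Function.Involutive σ) (A : S → S → ℝ)
    (x y : S → ℝ) :
    payoff (fun i j => A (σ j) (σ i)) x y = payoff A (y ∘ σ) (x ∘ σ) := by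
  unfold payoff
  rw [sum_comm, ← Equiv.sum_comp hσ.toPerm]
  refine sum_congr rfl fun j _ => ?_
  rw [← Equiv.sum_comp hσ.toPerm]
  simp [hσ _, mul_comm]

variable {R C : S → S → ℝ} {x y : S → ℝ} {ε : ℝ}

theorem IsEpsNash.sum_mul_le_of_le_gain {ι : Type*} [Fintype ι] (h : IsEpsNash R C x y ε)
    {e : ι → S} (he : Function.Injective e) (t : S) (d : ι → ℝ)
    (hd : ∀ i, d i ≤ payoff R (pureStrat t) y - payoff R (pureStrat (e i)) y) :
    ∑ i, x (e i) * d i ≤ ε := by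
  obtain ⟨⟨hx0, hx1⟩, -, hrow, -⟩ := h
  -- the regrets are nonnegative and their `x`-average is exactly `ε`
  set regret : S → ℝ := fun s => payoff R x y + ε - payoff R (pureStrat s) y
  have hregret : ∀ s, 0 ≤ regret s := fun s => by linarith [hrow s]
  calc ∑ i, x (e i) * d i ≤ ∑ i, x (e i) * regret (e i) :=
        sum_le_sum fun i _ => mul_le_mul_of_nonneg_left (by linarith [hd i, hrow t]) (hx0 _)
    _ = ∑ s ∈ univ.map ⟨e, he⟩, x s * regret s :=
        (sum_map univ ⟨e, he⟩ fun s => x s * regret s).symm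
    _ ≤ ∑ s, x s * regret s :=
        sum_le_sum_of_subset_of_nonneg (subset_univ _) fun s _ _ => mul_nonneg (hx0 s) (hregret s)
    _ = ε := by
        simp only [regret, mul_sub, mul_add, sum_sub_distrib, sum_add_distrib, ← sum_mul, hx1,
          ← payoff_eq_sum_mul_payoff_pureStrat]
        ring

theorem IsEpsNash.swap {σ : S → S} (hσ : Function.Involutive σ)
    (hC : ∀ i j, C i j = R (σ j) (σ i)) (h : IsEpsNash R C x y ε) :
    IsEpsNash R C (y ∘ σ) (x ∘ σ) ε := by
  have hC' : C = fun i j => R (σ j) (σ i) := funext₂ hC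
  have hR : R = fun i j => C (σ j) (σ i) := by simp [hC', hσ _]
  obtain ⟨⟨hx0, hx1⟩, ⟨hy0, hy1⟩, hrow, hcol⟩ := h
  have hsimplex : ∀ z : S → ℝ, z ∈ simplex S → z ∘ σ ∈ simplex S := fun z ⟨hz0, hz1⟩ =>
    ⟨fun i => hz0 (σ i), hz1 ▸ Equiv.sum_comp hσ.toPerm z⟩
  refine ⟨hsimplex y ⟨hy0, hy1⟩, hsimplex x ⟨hx0, hx1⟩, fun s => ?_, fun s => ?_⟩
  · have := hcol (σ s)
    rwa [hC', payoff_transpose_comp hσ, payoff_transpose_comp hσ, pureStrat_comp hσ,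
      hσ s] at this
  · have := hrow (σ s)
    rwa [hR, payoff_transpose_comp hσ, payoff_transpose_comp hσ, pureStrat_comp hσ,
      hσ s] at this

end BimatrixGame

namespace GStrat

variable {n m : ℕ}

def lit₁ (a : Lit n) : GStrat n m := Sum.inl a

def lit₂ (a : Lit n) : GStrat n m := Sum.inr (Sum.inl a)

/-- The variable and clause strategies `V ∪ C`. -/
def checker (k : Fin n ⊕ Fin m) : GStrat n m :=
  Sum.inr (Sum.inr (Sum.elim Sum.inl (Sum.inr ∘ Sum.inl) k))

theorem lit₁_injective : Function.Injective (lit₁ : Lit n → GStrat n m) :=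
  Sum.inl_injective

theorem lit₂_injective : Function.Injective (lit₂ : Lit n → GStrat n m) :=
  Sum.inr_injective.comp Sum.inl_injective

theorem checker_injective : Function.Injective (checker : Fin n ⊕ Fin m → GStrat n m) := by
  rintro (w | c) (w' | c') h <;> simp_all [checker]

theorem sum_univ (g : GStrat n m → ℝ) :
    ∑ s, g s = ∑ a, g (lit₁ a) + ∑ a, g (lit₂ a) + ∑ k, g (checker k) + g (fStrat n m) := by
  simp only [Fintype.sum_sum_type, univ_unique, sum_singleton, lit₁, lit₂, checker, fStrat,
    Sum.elim_inl, Sum.elim_inr, Function.comp_apply, PUnit.default_eq_unit]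
  ring

def swapL₁L₂ : GStrat n m → GStrat n m
  | Sum.inl a => Sum.inr (Sum.inl a)
  | Sum.inr (Sum.inl a) => Sum.inl a
  | Sum.inr (Sum.inr s) => Sum.inr (Sum.inr s)

theorem swapL₁L₂_involutive : Function.Involutive (swapL₁L₂ : GStrat n m → GStrat n m) := by
  rintro (a | a | s) <;> rfl

/-- Against an `L₂` literal, the checker `k` pays the row player `0` if the literal lies in
`checkedLits φ k` and `n` otherwise. -/
def checkedLits (φ : CNF3 n m) : Fin n ⊕ Fin m → Finset (Lit n)
  | Sum.inl w => {(w, true), (w, false)}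
  | Sum.inr c => φ.clause c

theorem mem_checkedLits_inl {φ : CNF3 n m} {a : Lit n} {w : Fin n} :
    a ∈ checkedLits φ (Sum.inl w) ↔ a.1 = w := by
  obtain ⟨v, _ | _⟩ := a <;> simp [checkedLits]

theorem sum_checkedLits_inl (φ : CNF3 n m) (g : Lit n → ℝ) (w : Fin n) :
    ∑ b ∈ checkedLits φ (Sum.inl w), g b = g (w, true) + g (w, false) :=
  sum_pair (by simp)

def massL₁ (z : GStrat n m → ℝ) : ℝ := ∑ a, z (lit₁ a)

def massL₂ (z : GStrat n m → ℝ) : ℝ := ∑ a, z (lit₂ a)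

def massChk (z : GStrat n m → ℝ) : ℝ := ∑ k, z (checker k)

theorem mass_add_eq_one {z : GStrat n m → ℝ} (hz : z ∈ simplex (GStrat n m)) :
    massL₁ z + massL₂ z + massChk z + z (fStrat n m) = 1 := by
  rw [← hz.2, sum_univ]; rfl

theorem massL₁_nonneg {z : GStrat n m → ℝ} (hz : z ∈ simplex (GStrat n m)) :
    0 ≤ massL₁ z :=
  sum_nonneg fun _ _ => hz.1 _

theorem massL₂_nonneg {z : GStrat n m → ℝ} (hz : z ∈ simplex (GStrat n m)) :
    0 ≤ massL₂ z :=
  sum_nonneg fun _ _ => hz.1 _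

theorem massChk_nonneg {z : GStrat n m → ℝ} (hz : z ∈ simplex (GStrat n m)) :
    0 ≤ massChk z :=
  sum_nonneg fun _ _ => hz.1 _

def conflict (x y : GStrat n m → ℝ) : ℝ := ∑ a, x (lit₁ a) * y (lit₂ (negLit a))

end GStrat

open GStrat

theorem negLit_involutive {n : ℕ} : Function.Involutive (negLit : Lit n → Lit n) := by
  intro a; simp [negLit]

theorem eq_negLit_comm {n : ℕ} {a b : Lit n} : a = negLit b ↔ b = negLit a := by
  constructor <;> rintro rfl <;> exact (negLit_involutive _).symm

theorem gU2_eq_gU1_swapL₁L₂ {n m : ℕ} (φ : CNF3 n m) (i j : GStrat n m) :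
    gU2 φ i j = gU1 φ (swapL₁L₂ j) (swapL₁L₂ i) := by
  rcases i with a | a | w | c | u <;> rcases j with b | b | v | d | u' <;> try rfl
  simp only [gU2, gU1, swapL₁L₂, eq_negLit_comm]

theorem IsEpsNash.swapL₁L₂ {n m : ℕ} {φ : CNF3 n m} {x y : GStrat n m → ℝ} {ε : ℝ}
    (h : IsEpsNash (gU1 φ) (gU2 φ) x y ε) :
    IsEpsNash (gU1 φ) (gU2 φ) (y ∘ swapL₁L₂) (x ∘ swapL₁L₂) ε :=
  h.swap swapL₁L₂_involutive (gU2_eq_gU1_swapL₁L₂ φ)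

section RowPayoffs

variable {n m : ℕ} (φ : CNF3 n m)

section Entries

variable (a b : Lit n) (k k' : Fin n ⊕ Fin m)

@[simp] theorem gU1_lit₁_lit₁ : gU1 φ (lit₁ a) (lit₁ b) = 0 := rfl
@[simp] theorem gU1_lit₁_lit₂ :
    gU1 φ (lit₁ a) (lit₂ b) = if a = negLit b then (n : ℝ) - 4 else (n : ℝ) - 1 := rfl
@[simp] theorem gU1_lit₁_checker : gU1 φ (lit₁ a) (checker k) = (n : ℝ) - 4 := by
  cases k <;> rfl
@[simp] theorem gU1_lit₁_f : gU1 φ (lit₁ a) (fStrat n m) = 0 := rfl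

@[simp] theorem gU1_lit₂ (j : GStrat n m) : gU1 φ (lit₂ a) j = -2 * (n : ℝ) := rfl

@[simp] theorem gU1_checker_lit₁ : gU1 φ (checker k) (lit₁ b) = 0 := by cases k <;> rfl
@[simp] theorem gU1_checker_lit₂ :
    gU1 φ (checker k) (lit₂ b) = if b ∈ checkedLits φ k then 0 else (n : ℝ) := by
  rcases k with w | c
  · simp only [mem_checkedLits_inl]; rfl
  · rfl
@[simp] theorem gU1_checker_checker : gU1 φ (checker k) (checker k') = (n : ℝ) - 4 := by
  cases k <;> cases k' <;> rfl
@[simp] theorem gU1_checker_f : gU1 φ (checker k) (fStrat n m) = 0 := by cases k <;> rfl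

@[simp] theorem gU1_f_lit₁ : gU1 φ (fStrat n m) (lit₁ b) = (n : ℝ) - 1 := rfl
@[simp] theorem gU1_f_lit₂ : gU1 φ (fStrat n m) (lit₂ b) = (n : ℝ) - 1 := rfl
@[simp] theorem gU1_f_checker : gU1 φ (fStrat n m) (checker k) = (n : ℝ) - 1 := by
  cases k <;> rfl
@[simp] theorem gU1_f_f : gU1 φ (fStrat n m) (fStrat n m) = 2 * (n : ℝ) := rfl

end Entries

theorem payoff_gU1_pureStrat_lit₁ (y : GStrat n m → ℝ) (a : Lit n) :
    payoff (gU1 φ) (pureStrat (lit₁ a)) y =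
      (n - 1) * massL₂ y - 3 * y (lit₂ (negLit a)) + (n - 4) * massChk y := by
  have hterm : ∀ b, y (lit₂ b) * (if a = negLit b then (n : ℝ) - 4 else (n : ℝ) - 1) =
      (n - 1) * y (lit₂ b) - 3 * if b = negLit a then y (lit₂ b) else 0 := fun b => by
    simp only [eq_negLit_comm]; split_ifs <;> ring
  simp only [payoff_pureStrat_left, sum_univ, gU1_lit₁_lit₁, gU1_lit₁_lit₂, gU1_lit₁_checker,
    gU1_lit₁_f, hterm, sum_sub_distrib, ← mul_sum, sum_ite_eq', mem_univ, if_true, mul_zero,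
    sum_const_zero, massL₂, massChk, ← sum_mul]
  ring

theorem payoff_gU1_pureStrat_lit₂ {y : GStrat n m → ℝ} (hy : y ∈ simplex (GStrat n m))
    (a : Lit n) : payoff (gU1 φ) (pureStrat (lit₂ a)) y = -2 * n := by
  simp only [payoff_pureStrat_left, gU1_lit₂, ← sum_mul, hy.2, one_mul]

theorem payoff_gU1_pureStrat_checker (y : GStrat n m → ℝ) (k : Fin n ⊕ Fin m) :
    payoff (gU1 φ) (pureStrat (checker k)) y =
      n * massL₂ y - n * ∑ b ∈ checkedLits φ k, y (lit₂ b) + (n - 4) * massChk y := by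
  have hterm : ∀ b, y (lit₂ b) * (if b ∈ checkedLits φ k then 0 else (n : ℝ)) =
      n * y (lit₂ b) - n * if b ∈ checkedLits φ k then y (lit₂ b) else 0 := fun b => by
    split_ifs <;> ring
  simp only [payoff_pureStrat_left, sum_univ, gU1_checker_lit₁, gU1_checker_lit₂,
    gU1_checker_checker, gU1_checker_f, hterm, sum_sub_distrib, ← mul_sum, sum_ite_mem,
    univ_inter, mul_zero, sum_const_zero, massL₂, massChk, ← sum_mul]
  ring

theorem payoff_gU1_pureStrat_f {y : GStrat n m → ℝ} (hy : y ∈ simplex (GStrat n m)) :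
    payoff (gU1 φ) (pureStrat (fStrat n m)) y = n - 1 + (n + 1) * y (fStrat n m) := by
  rw [payoff_pureStrat_left, sum_univ]
  have hsum := mass_add_eq_one hy
  simp only [massL₁, massL₂, massChk] at hsum
  simp only [gU1_f_lit₁, gU1_f_lit₂, gU1_f_checker, gU1_f_f, ← sum_mul]
  linear_combination ((n : ℝ) - 1) * hsum

theorem payoff_gU1_pureStrat_le {y : GStrat n m → ℝ} (hy : y ∈ simplex (GStrat n m))
    {s : GStrat n m} (hs : s ≠ fStrat n m) :
    payoff (gU1 φ) (pureStrat s) y ≤ n * (1 - y (fStrat n m)) := by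
  have hsum := mass_add_eq_one hy
  have h₁ := massL₁_nonneg hy
  have h₂ := massL₂_nonneg hy
  have hc := massChk_nonneg hy
  have hn : (0 : ℝ) ≤ n := n.cast_nonneg
  rcases s with a | a | w | c | ⟨⟩
  · rw [← lit₁, payoff_gU1_pureStrat_lit₁]
    nlinarith [hy.1 (lit₂ (negLit a))]
  · rw [← lit₂, payoff_gU1_pureStrat_lit₂ φ hy]
    nlinarith
  · change payoff (gU1 φ) (pureStrat (checker (Sum.inl w))) y ≤ _
    rw [payoff_gU1_pureStrat_checker]
    nlinarith [sum_nonneg fun b (_ : b ∈ checkedLits φ (Sum.inl w)) => hy.1 (lit₂ b)]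
  · change payoff (gU1 φ) (pureStrat (checker (Sum.inr c))) y ≤ _
    rw [payoff_gU1_pureStrat_checker]
    nlinarith [sum_nonneg fun b (_ : b ∈ checkedLits φ (Sum.inr c)) => hy.1 (lit₂ b)]
  · exact absurd rfl hs

theorem payoff_gU1_le (hn : 4 ≤ n) {x y : GStrat n m → ℝ} (hx : x ∈ simplex (GStrat n m))
    (hy : y ∈ simplex (GStrat n m)) :
    payoff (gU1 φ) x y ≤ (n - 1) * massL₂ y + (n - 4) * massChk y + massChk x +
      x (fStrat n m) * (n - 1 + (n + 1) * y (fStrat n m)) := by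
  have hn' : (4 : ℝ) ≤ n := by exact_mod_cast hn
  set K : ℝ := (n - 1) * massL₂ y + (n - 4) * massChk y
  have hK : 0 ≤ K := by nlinarith [massL₂_nonneg hy, massChk_nonneg hy]
  have hL₁ : ∑ a, x (lit₁ a) * payoff (gU1 φ) (pureStrat (lit₁ a)) y ≤ massL₁ x * K := by
    rw [massL₁, sum_mul]
    refine sum_le_sum fun a _ => mul_le_mul_of_nonneg_left ?_ (hx.1 _)
    rw [payoff_gU1_pureStrat_lit₁]
    linarith [hy.1 (lit₂ (negLit a))]
  have hL₂ : ∑ a, x (lit₂ a) * payoff (gU1 φ) (pureStrat (lit₂ a)) y ≤ 0 := by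
    refine sum_nonpos fun a _ => ?_
    rw [payoff_gU1_pureStrat_lit₂ φ hy]
    nlinarith [hx.1 (lit₂ a)]
  have hChk : ∑ k, x (checker k) * payoff (gU1 φ) (pureStrat (checker k)) y ≤
      massChk x * (K + 1) := by
    rw [massChk, sum_mul]
    refine sum_le_sum fun k _ => mul_le_mul_of_nonneg_left ?_ (hx.1 _)
    rw [payoff_gU1_pureStrat_checker]
    have := sum_nonneg fun b (_ : b ∈ checkedLits φ k) => hy.1 (lit₂ b)
    nlinarith [mass_add_eq_one hy, massL₁_nonneg hy, massChk_nonneg hy, hy.1 (fStrat n m)]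
  rw [payoff_eq_sum_mul_payoff_pureStrat, sum_univ, payoff_gU1_pureStrat_f φ hy]
  nlinarith [mass_add_eq_one hx,
    mul_nonneg (add_nonneg (massL₂_nonneg hx) (hx.1 (fStrat n m))) hK]

end RowPayoffs

namespace IsEpsNash

variable {n m : ℕ} {φ : CNF3 n m} {x y : GStrat n m → ℝ} {ε : ℝ}

theorem massL₂_mul_le (h : IsEpsNash (gU1 φ) (gU2 φ) x y ε) :
    massL₂ x * (3 * n - 1) ≤ ε := by
  have hy := h.2.1
  have := h.sum_mul_le_of_le_gain lit₂_injective (fStrat n m) (fun _ => 3 * n - 1) fun a => by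
    rw [payoff_gU1_pureStrat_f φ hy, payoff_gU1_pureStrat_lit₂ φ hy]
    nlinarith [hy.1 (fStrat n m), n.cast_nonneg (α := ℝ)]
  rwa [← sum_mul] at this

theorem conflict_le (h : IsEpsNash (gU1 φ) (gU2 φ) x y ε) (hn : 0 < n) :
    3 * conflict x y ≤ ε := by
  have hsum : ∑ w : Fin n, n * (y (lit₂ (w, true)) + y (lit₂ (w, false))) =
      ∑ _w : Fin n, massL₂ y := by
    rw [sum_const, card_univ, Fintype.card_fin, nsmul_eq_mul, ← mul_sum, massL₂,
      Fintype.sum_prod_type]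
    simp only [Fintype.sum_bool]
  -- some variable `w` carries at most a `1 / n` share of the column player's `L₂`-mass
  obtain ⟨w, -, hw⟩ := exists_le_of_sum_le (univ_nonempty_iff.2 ⟨⟨0, hn⟩⟩) hsum.le
  have := h.sum_mul_le_of_le_gain lit₁_injective (checker (Sum.inl w))
    (fun a => 3 * y (lit₂ (negLit a))) fun a => by
      rw [payoff_gU1_pureStrat_checker, sum_checkedLits_inl, payoff_gU1_pureStrat_lit₁]
      linarith
  rw [conflict, mul_sum]
  convert this using 2 with a
  ring

theorem massL₁_mul_le (h : IsEpsNash (gU1 φ) (gU2 φ) x y ε) (hn : 0 < n) :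
    massL₁ x * (2 * n * y (fStrat n m) + 3 * massChk y) ≤ ε := by
  have hy := h.2.1
  have hn' : (1 : ℝ) ≤ n := by exact_mod_cast hn
  have := h.sum_mul_le_of_le_gain lit₁_injective (fStrat n m)
    (fun _ => 2 * n * y (fStrat n m) + 3 * massChk y) fun a => by
      rw [payoff_gU1_pureStrat_f φ hy, payoff_gU1_pureStrat_lit₁]
      nlinarith [mass_add_eq_one hy, mul_nonneg (sub_nonneg.2 hn') (massL₁_nonneg hy),
        hy.1 (lit₂ (negLit a))]
  rwa [← sum_mul] at this

theorem massChk_mul_le (h : IsEpsNash (gU1 φ) (gU2 φ) x y ε) :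
    massChk x * (4 * massChk y - 1) ≤ ε := by
  have hy := h.2.1
  have hn : (0 : ℝ) ≤ n := n.cast_nonneg
  have := h.sum_mul_le_of_le_gain checker_injective (fStrat n m) (fun _ => 4 * massChk y - 1)
    fun k => by
      rw [payoff_gU1_pureStrat_f φ hy, payoff_gU1_pureStrat_checker]
      have := sum_nonneg fun b (_ : b ∈ checkedLits φ k) => hy.1 (lit₂ b)
      nlinarith [mass_add_eq_one hy, mul_nonneg hn (massL₁_nonneg hy), hy.1 (fStrat n m),
        mul_nonneg hn (hy.1 (fStrat n m)), mul_nonneg hn this]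
  rwa [← sum_mul] at this

theorem one_sub_mul_le (h : IsEpsNash (gU1 φ) (gU2 φ) x y ε) :
    (1 - x (fStrat n m)) * ((2 * n + 1) * y (fStrat n m) - 1) ≤ ε := by
  have hy := h.2.1
  have := h.sum_mul_le_of_le_gain (ι := {s // s ≠ fStrat n m}) Subtype.val_injective
    (fStrat n m) (fun _ => (2 * n + 1) * y (fStrat n m) - 1) fun s => by
      rw [payoff_gU1_pureStrat_f φ hy]
      linarith [payoff_gU1_pureStrat_le φ hy s.2]
  rwa [← sum_mul, ← sum_subtype (univ.erase (fStrat n m)) (by simp) x,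
    sum_erase_eq_sub (mem_univ _), h.1.2] at this

theorem sub_le_mul_sum_checkedLits (h : IsEpsNash (gU1 φ) (gU2 φ) x y ε) (hn : 4 ≤ n)
    (k : Fin n ⊕ Fin m) :
    massL₂ y - massChk x - x (fStrat n m) * (n - 1 + (n + 1) * y (fStrat n m)) - ε ≤
      n * ∑ b ∈ checkedLits φ k, y (lit₂ b) := by
  have := h.2.2.1 (checker k)
  rw [payoff_gU1_pureStrat_checker] at this
  linarith [payoff_gU1_le φ hn h.1 h.2.1]

theorem mul_apply_fStrat_le_two (h : IsEpsNash (gU1 φ) (gU2 φ) x y ε) (hε : 0 < ε)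
    (hp : ε ≤ 1 - x (fStrat n m)) : (2 * n + 1) * y (fStrat n m) ≤ 2 := by
  by_contra! hq
  nlinarith [h.one_sub_mul_le]

theorem massChk_le_half (h : IsEpsNash (gU1 φ) (gU2 φ) x y ε) (hn : 4 ≤ n)
    (hε : ε ≤ 1 / 128) (hp : (2 * n + 1) * x (fStrat n m) ≤ 2) : massChk y ≤ 1 / 2 := by
  have hn' : (4 : ℝ) ≤ n := by exact_mod_cast hn
  have hx := h.1
  have hy := h.2.1
  by_contra! hs
  have hr : massChk x ≤ ε := by nlinarith [h.massChk_mul_le, massChk_nonneg hx]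
  have ha₁ : 3 * massL₁ x * massChk y ≤ ε := by
    nlinarith [h.massL₁_mul_le (by omega),
      mul_nonneg (massL₁_nonneg hx) (mul_nonneg n.cast_nonneg (hy.1 (fStrat n m)))]
  have ha₂ : massL₂ x * 11 ≤ ε := by nlinarith [h.massL₂_mul_le, massL₂_nonneg hx]
  nlinarith [mass_add_eq_one hx, mul_nonneg (massL₁_nonneg hx) (sub_pos.2 hs).le,
    mul_nonneg (sub_nonneg.2 hn') (hx.1 (fStrat n m))]

theorem massChk_le (h : IsEpsNash (gU1 φ) (gU2 φ) x y ε) (hn : 4 ≤ n) (hε : ε ≤ 1 / 128)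
    (hr : massChk x ≤ 1 / 2) (hp : (2 * n + 1) * x (fStrat n m) ≤ 2) :
    massChk y ≤ 4 / 3 * ε := by
  have hn' : (4 : ℝ) ≤ n := by exact_mod_cast hn
  have hx := h.1
  have hy := h.2.1
  have ha₂ : massL₂ x * 11 ≤ ε := by nlinarith [h.massL₂_mul_le, massL₂_nonneg hx]
  have ha₁ : 1 / 4 ≤ massL₁ x := by
    nlinarith [mass_add_eq_one hx, mul_nonneg (sub_nonneg.2 hn') (hx.1 (fStrat n m))]
  nlinarith [h.massL₁_mul_le (by omega), massChk_nonneg hy, hy.1 (fStrat n m),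
    mul_nonneg (massL₁_nonneg hx) (hy.1 (fStrat n m))]

theorem natCast_mul_apply_fStrat_le (h : IsEpsNash (gU1 φ) (gU2 φ) x y ε) (hn : 4 ≤ n)
    (hε : ε ≤ 1 / 128) (hr : massChk x ≤ 4 / 3 * ε) (hp : (2 * n + 1) * x (fStrat n m) ≤ 2) :
    n * y (fStrat n m) ≤ 2 / 3 * ε := by
  have hn' : (4 : ℝ) ≤ n := by exact_mod_cast hn
  have hx := h.1
  have hy := h.2.1
  have ha₂ : massL₂ x * 11 ≤ ε := by nlinarith [h.massL₂_mul_le, massL₂_nonneg hx]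
  have ha₁ : 3 / 4 ≤ massL₁ x := by
    nlinarith [mass_add_eq_one hx, mul_nonneg (sub_nonneg.2 hn') (hx.1 (fStrat n m))]
  nlinarith [h.massL₁_mul_le (by omega), mul_nonneg (massL₁_nonneg hx) (massChk_nonneg hy),
    mul_nonneg (sub_nonneg.2 ha₁) (mul_nonneg n.cast_nonneg (hy.1 (fStrat n m)))]

theorem one_sub_le_mul_sum_checkedLits (h : IsEpsNash (gU1 φ) (gU2 φ) x y ε) (hn : 4 ≤ n)
    (hr : massChk x ≤ 4 / 3 * ε) (hs : massChk y ≤ 4 / 3 * ε)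
    (hnp : n * x (fStrat n m) ≤ 2 / 3 * ε) (hnq : n * y (fStrat n m) ≤ 2 / 3 * ε)
    (k : Fin n ⊕ Fin m) : 1 - 6 * ε ≤ n * ∑ b ∈ checkedLits φ k, y (lit₂ b) := by
  have hn' : (4 : ℝ) ≤ n := by exact_mod_cast hn
  have hx := h.1
  have hy := h.2.1
  have hb₁ : massL₁ y * (3 * n - 1) ≤ ε := h.swapL₁L₂.massL₂_mul_le
  have hfx : x (fStrat n m) * (n - 1 + (n + 1) * y (fStrat n m)) ≤ 4 / 3 * ε := by
    nlinarith [hx.1 (fStrat n m), hy.1 (fStrat n m), mass_add_eq_one hy, massL₁_nonneg hy,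
      massL₂_nonneg hy, massChk_nonneg hy]
  nlinarith [h.sub_le_mul_sum_checkedLits hn k, mass_add_eq_one hy, massChk_nonneg hx,
    mul_nonneg (massL₁_nonneg hy) (by linarith : (0 : ℝ) ≤ 3 * n - 12),
    mul_nonneg (sub_nonneg.2 hn') (hy.1 (fStrat n m))]

theorem mul_apply_fStrat_le_two_of_not_and (h : IsEpsNash (gU1 φ) (gU2 φ) x y ε) (hn : 4 ≤ n)
    (hε0 : 0 < ε) (hε1 : ε ≤ 1 / 128)
    (hf : ¬(1 - ε < x (fStrat n m) ∧ 1 - ε < y (fStrat n m))) :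
    (2 * n + 1) * x (fStrat n m) ≤ 2 ∧ (2 * n + 1) * y (fStrat n m) ≤ 2 := by
  have hn' : (4 : ℝ) ≤ n := by exact_mod_cast hn
  have hfar : ∀ z : ℝ, (2 * n + 1) * z ≤ 2 → ε ≤ 1 - z := fun z hz => by nlinarith
  rcases not_and_or.1 hf with hx | hy
  · have hq := h.mul_apply_fStrat_le_two hε0 (by linarith [not_lt.1 hx])
    exact ⟨h.swapL₁L₂.mul_apply_fStrat_le_two hε0 (hfar _ hq), hq⟩
  · have hp := h.swapL₁L₂.mul_apply_fStrat_le_two hε0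
      (show ε ≤ 1 - y (fStrat n m) by linarith [not_lt.1 hy])
    exact ⟨hp, h.mul_apply_fStrat_le_two hε0 (hfar _ hp)⟩

end IsEpsNash

theorem CNF3.satisfiable_of_mul_conflict_lt {n m : ℕ} (φ : CNF3 n m) {x y : GStrat n m → ℝ}
    {δ : ℝ} (hx : ∀ i, 0 ≤ x i) (hy : ∀ i, 0 ≤ y i) (hδ : 0 ≤ δ)
    (hcovX : ∀ w, δ ≤ n * (x (lit₁ (w, true)) + x (lit₁ (w, false))))
    (hcovY : ∀ c, δ ≤ n * ∑ b ∈ φ.clause c, y (lit₂ b))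
    (hconf : 2 * n ^ 2 * conflict x y < δ ^ 2) : φ.Satisfiable := by
  by_contra hunsat
  set A : Fin n → Bool := fun w => decide (x (lit₁ (w, false)) ≤ x (lit₁ (w, true)))
  obtain ⟨c, hc⟩ : ∃ c, ∀ l ∈ φ.clause c, A l.1 ≠ l.2 := by
    by_contra! hsat
    exact hunsat ⟨A, hsat⟩
  have hn : (0 : ℝ) ≤ n := n.cast_nonneg
  have hneg : ∀ l ∈ φ.clause c, δ ≤ 2 * n * x (lit₁ (negLit l)) := by
    rintro ⟨w, _ | _⟩ hl <;> have := hc _ hl <;> simp [A, negLit] at this ⊢ <;>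
      nlinarith [hcovX w]
  have hsub : ∑ l ∈ φ.clause c, y (lit₂ l) * x (lit₁ (negLit l)) ≤ conflict x y := by
    calc ∑ l ∈ φ.clause c, y (lit₂ l) * x (lit₁ (negLit l))
        ≤ ∑ l, y (lit₂ l) * x (lit₁ (negLit l)) :=
          sum_le_sum_of_subset_of_nonneg (subset_univ _) fun l _ _ => mul_nonneg (hy _) (hx _)
      _ = conflict x y := by
          rw [conflict, ← Equiv.sum_comp (Function.Involutive.toPerm _ negLit_involutive)]
          simp [negLit_involutive _, mul_comm]
  have hsum : δ * ∑ l ∈ φ.clause c, y (lit₂ l) ≤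
      2 * n * ∑ l ∈ φ.clause c, y (lit₂ l) * x (lit₁ (negLit l)) := by
    rw [mul_sum, mul_sum]
    exact sum_le_sum fun l hl => by nlinarith [hneg l hl, hy (lit₂ l)]
  have := mul_le_mul_of_nonneg_left (hcovY c) hδ
  nlinarith [mul_le_mul_of_nonneg_left hsum hn, mul_le_mul_of_nonneg_left hsub
    (by positivity : (0 : ℝ) ≤ 2 * n ^ 2)]

theorem stmt18 {n m : ℕ} (hn : 4 ≤ n) (φ : CNF3 n m)
    (ε : ℝ) (hε : ε = 1 / (2 * (n : ℝ) ^ 3))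
    (hunsat : ¬ φ.Satisfiable) :
    ∀ x y : GStrat n m → ℝ, IsEpsNash (gU1 φ) (gU2 φ) x y ε →
      1 - ε < x (fStrat n m) ∧ 1 - ε < y (fStrat n m) := by
  intro x y h
  have hn' : (4 : ℝ) ≤ n := by exact_mod_cast hn
  have hεn : 2 * n ^ 3 * ε = 1 := by rw [hε]; field_simp
  have hε0 : 0 < ε := by rw [hε]; positivity
  have hε1 : ε ≤ 1 / 128 := by
    nlinarith [mul_le_mul_of_nonneg_right (pow_le_pow_left₀ (by norm_num) hn' 3) hε0.le]
  have h' := h.swapL₁L₂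
  by_contra hf
  obtain ⟨hp, hq⟩ := h.mul_apply_fStrat_le_two_of_not_and hn hε0 hε1 hf
  have hs := h.massChk_le hn hε1 (h'.massChk_le_half hn hε1 hq) hp
  have hr : massChk x ≤ 4 / 3 * ε := h'.massChk_le hn hε1 (h.massChk_le_half hn hε1 hp) hq
  have hnq := h.natCast_mul_apply_fStrat_le hn hε1 hr hp
  have hnp : n * x (fStrat n m) ≤ 2 / 3 * ε := h'.natCast_mul_apply_fStrat_le hn hε1 hs hq
  refine hunsat (φ.satisfiable_of_mul_conflict_lt h.1.1 h.2.1.1 (δ := 1 - 6 * ε) (by linarith)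
    (fun w => ?_) (fun c => h.one_sub_le_mul_sum_checkedLits hn hr hs hnp hnq (Sum.inr c)) ?_)
  · have := h'.one_sub_le_mul_sum_checkedLits hn hs hr hnq hnp (Sum.inl w)
    rwa [sum_checkedLits_inl] at this
  · have hεn' : 2 * n ^ 2 * ε * 4 ≤ 1 := by nlinarith
    nlinarith [mul_le_mul_of_nonneg_left (h.conflict_le (by omega))
      (by positivity : (0 : ℝ) ≤ 2 * n ^ 2)]
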